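/- arXiv:2604.26387 — 5 statements merged into one kernel-verified Lean document; each statement's English description precedes it below -/
import Mathlib

section
/- Let L/K be a finite Galois extension with Galois group G, and let V be an L-vector space equipped with a semilinear G-representation ρ (i.e., each ρ_σ is additive, satisfies ρ_σ(λv) = σ(λ)ρ_σ(v), and ρ is a group homomorphism into invertible semilinear maps). Let V^G = {v ∈ V | ρ_σ(v) = v for all σ ∈ G}. Then the natural map μ : V^G ⊗_K L → V given by v ⊗ λ ↦ λv is an isomorphism of L-vector spaces; in particular dim_K V^G = dim_L V. -/
open TensorProduct

/-- Galois descent for semilinear representations: let `L/K` be a finite Galois extension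
with Galois group `G = Gal(L/K)`, and let `V` be an `L`-vector space with a semilinear
`G`-representation `ρ` (each `ρ σ` additive with `ρ σ (l • v) = σ l • ρ σ v`, and
`ρ (σ * τ) v = ρ σ (ρ τ v)`, `ρ 1 = id`). If `Vfix` is the `K`-subspace of fixed points,
then the natural map `μ : Vfix ⊗[K] L → V`, `v ⊗ λ ↦ λ • v`, is bijective (an isomorphism
of `L`-vector spaces); in particular `dim_K Vfix = dim_L V`. -/
theorem stmt1 {K L : Type*} [Field K] [Field L] [Algebra K L]
    [FiniteDimensional K L] [IsGalois K L]
    (V : Type*) [AddCommGroup V] [Module L V] [Module K V] [IsScalarTower K L V]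
    (ρ : (L ≃ₐ[K] L) → V ≃+ V)
    (hsemi : ∀ (σ : L ≃ₐ[K] L) (l : L) (v : V), ρ σ (l • v) = σ l • ρ σ v)
    (hmul : ∀ (σ τ : L ≃ₐ[K] L) (v : V), ρ (σ * τ) v = ρ σ (ρ τ v))
    (hone : ∀ v : V, ρ 1 v = v)
    (Vfix : Submodule K V)
    (hVfix : ∀ v : V, v ∈ Vfix ↔ ∀ σ : L ≃ₐ[K] L, ρ σ v = v) :
    Function.Bijective
      (TensorProduct.lift
        (LinearMap.mk₂ K (fun (v : Vfix) (l : L) => l • (v : V))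
          (by intro v w l; (try dsimp only); rw [Submodule.coe_add, smul_add])
          (by intro c v l; (try dsimp only); rw [Submodule.coe_smul]; exact (smul_comm c l _).symm)
          (by intro v l l'; (try dsimp only); rw [add_smul])
          (by intro c v l; (try dsimp only); exact smul_assoc c l _))
        : Vfix ⊗[K] L → V) ∧
    Module.finrank K Vfix = Module.finrank L V := by
  classical
  set F : Vfix ⊗[K] L →ₗ[K] V :=
    TensorProduct.lift
        (LinearMap.mk₂ K (fun (v : Vfix) (l : L) => l • (v : V))
          (by intro v w l; (try dsimp only); rw [Submodule.coe_add, smul_add])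
          (by intro c v l; (try dsimp only); rw [Submodule.coe_smul]; exact (smul_comm c l _).symm)
          (by intro v l l'; (try dsimp only); rw [add_smul])
          (by intro c v l; (try dsimp only); exact smul_assoc c l _)) with hF
  have hFtmul : ∀ (w : Vfix) (l : L), F (w ⊗ₜ[K] l) = l • (w : V) := by
    intro w l; rw [hF]; simp
  -- basis and trace-form dual basis
  set n := Module.finrank K L with hn
  set b : Module.Basis (Fin n) K L := Module.finBasis K L with hb
  have hnd := traceForm_nondegenerate K L
  set c : Module.Basis (Fin n) K L := (Algebra.traceForm K L).dualBasis hnd b with hc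
  -- the trace as a sum over automorphisms
  have htr : ∀ x : L, algebraMap K L (Algebra.trace K L x) = ∑ σ : L ≃ₐ[K] L, σ x :=
    fun x => trace_eq_sum_automorphisms x
  -- key matrix identity
  have key1 : ∀ σ : L ≃ₐ[K] L, (∑ i : Fin n, σ (b i) * c i) = if σ = 1 then 1 else 0 := by
    intro σ
    set M : Matrix (Fin n) (L ≃ₐ[K] L) L := fun i τ => τ (c i) with hM
    set N : Matrix (L ≃ₐ[K] L) (Fin n) L := fun τ i => τ (b i) with hN
    have hMN : M * N = 1 := by
      ext i j
      rw [Matrix.mul_apply]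
      have : ∀ τ : L ≃ₐ[K] L, M i τ * N τ j = τ (c i * b j) := by
        intro τ; rw [hM, hN]; simp [map_mul]
      rw [Finset.sum_congr rfl (fun τ _ => this τ), ← htr (c i * b j)]
      have h2 : Algebra.trace K L (c i * b j) = if j = i then 1 else 0 := by
        have := (Algebra.traceForm K L).apply_dualBasis_left hnd b i j
        rwa [Algebra.traceForm_apply] at this
      rw [h2, Matrix.one_apply]
      by_cases h : i = j
      · simp [h]
      · simp [h, Ne.symm h]
    have e : Fin n ≃ (L ≃ₐ[K] L) :=
      Fintype.equivOfCardEq (by rw [Fintype.card_fin, hn, ← Nat.card_eq_fintype_card, IsGalois.card_aut_eq_finrank])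
    have hNM : N * M = 1 := (Matrix.mul_eq_one_comm_of_equiv e).mp hMN
    have := congrFun (congrFun hNM σ) 1
    rw [Matrix.mul_apply, Matrix.one_apply] at this
    simpa [hM, hN] using this
  -- the averaging operator lands in Vfix
  have key0 : ∀ (l : L) (v : V), (∑ σ : L ≃ₐ[K] L, σ l • ρ σ v) ∈ Vfix := by
    intro l v
    rw [hVfix]
    intro τ
    rw [map_sum]
    have h1 : ∀ σ : L ≃ₐ[K] L, ρ τ (σ l • ρ σ v) = (τ * σ) l • ρ (τ * σ) v := by
      intro σ
      rw [hsemi, ← hmul]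
      rfl
    rw [Finset.sum_congr rfl (fun σ _ => h1 σ)]
    exact Fintype.sum_equiv (Equiv.mulLeft τ) _ _ (fun σ => rfl)
  -- the inverse map
  set ν : V → Vfix ⊗[K] L :=
    fun v => ∑ i : Fin n, (⟨∑ σ : L ≃ₐ[K] L, σ (b i) • ρ σ v, key0 _ _⟩ : Vfix) ⊗ₜ[K] c i
    with hν
  have hνadd : ∀ x y : V, ν (x + y) = ν x + ν y := by
    intro x y
    rw [hν]
    dsimp only
    rw [← Finset.sum_add_distrib]
    refine Finset.sum_congr rfl (fun i _ => ?_)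
    rw [← add_tmul]
    congr 1
    ext
    simp [smul_add, Finset.sum_add_distrib]
  -- left inverse
  have hLI : ∀ t : Vfix ⊗[K] L, ν (F t) = t := by
    intro t
    induction t using TensorProduct.induction_on with
    | zero =>
      rw [map_zero, hν]
      dsimp only
      have : ∀ i : Fin n, (⟨∑ σ : L ≃ₐ[K] L, σ (b i) • ρ σ (0 : V), key0 _ _⟩ : Vfix)
          = 0 := by
        intro i; ext; simp
      rw [Finset.sum_congr rfl (fun i _ => by rw [this i, zero_tmul])]
      simp
    | tmul w l =>
      obtain ⟨w, hw⟩ := w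
      rw [hFtmul, hν]
      dsimp only
      have hfix : ∀ σ : L ≃ₐ[K] L, ρ σ w = w := (hVfix w).mp hw
      have hinner : ∀ i : Fin n,
          (⟨∑ σ : L ≃ₐ[K] L, σ (b i) • ρ σ (l • w), key0 _ _⟩ : Vfix)
            = Algebra.trace K L (b i * l) • (⟨w, hw⟩ : Vfix) := by
        intro i
        ext
        rw [Submodule.coe_smul]
        dsimp only
        have : ∀ σ : L ≃ₐ[K] L, σ (b i) • ρ σ (l • w) = σ (b i * l) • w := by
          intro σ
          rw [hsemi, hfix, smul_smul, ← map_mul]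
        rw [Finset.sum_congr rfl (fun σ _ => this σ), ← Finset.sum_smul, ← htr,
          algebraMap_smul]
      rw [Finset.sum_congr rfl (fun i _ => by rw [hinner i, smul_tmul]), ← tmul_sum]
      congr 1
      have hrepr : ∀ i : Fin n, c.repr l i = Algebra.trace K L (b i * l) := by
        intro i
        rw [hc, (Algebra.traceForm K L).dualBasis_repr_apply, Algebra.traceForm_apply,
          mul_comm]
      calc ∑ i : Fin n, Algebra.trace K L (b i * l) • c i
          = ∑ i : Fin n, c.repr l i • c i := by
            refine Finset.sum_congr rfl (fun i _ => ?_); rw [hrepr i]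
        _ = l := c.sum_repr l
    | add x y hx hy =>
      rw [map_add, hνadd, hx, hy]
  -- right inverse
  have hRI : ∀ v : V, F (ν v) = v := by
    intro v
    rw [hν]
    dsimp only
    rw [map_sum]
    have h1 : ∀ i : Fin n,
        F ((⟨∑ σ : L ≃ₐ[K] L, σ (b i) • ρ σ v, key0 _ _⟩ : Vfix) ⊗ₜ[K] c i)
          = ∑ σ : L ≃ₐ[K] L, (σ (b i) * c i) • ρ σ v := by
      intro i
      rw [hFtmul]
      dsimp only
      rw [Finset.smul_sum]
      refine Finset.sum_congr rfl (fun σ _ => ?_)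
      rw [smul_smul, mul_comm]
    rw [Finset.sum_congr rfl (fun i _ => h1 i), Finset.sum_comm]
    have h2 : ∀ σ : L ≃ₐ[K] L, (∑ i : Fin n, (σ (b i) * c i) • ρ σ v)
        = (if σ = 1 then (1:L) else 0) • ρ σ v := by
      intro σ
      rw [← Finset.sum_smul, key1 σ]
    rw [Finset.sum_congr rfl (fun σ _ => h2 σ)]
    simp only [ite_smul, one_smul, zero_smul]
    rw [Finset.sum_ite_eq' Finset.univ (1 : L ≃ₐ[K] L) (fun σ => ρ σ v)]
    simp [hone]
  have hbij : Function.Bijective F :=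
    ⟨Function.LeftInverse.injective hLI, Function.RightInverse.surjective hRI⟩
  refine ⟨hbij, ?_⟩
  -- dimension count
  have e : (Vfix ⊗[K] L) ≃ₗ[K] V := LinearEquiv.ofBijective F hbij
  by_cases hfd : FiniteDimensional L V
  · have : FiniteDimensional K V := FiniteDimensional.trans K L V
    have hfdfix : FiniteDimensional K Vfix := inferInstance
    have h1 : Module.finrank K (Vfix ⊗[K] L) = Module.finrank K V := e.finrank_eq
    rw [Module.finrank_tensorProduct] at h1
    have h2 : Module.finrank K L * Module.finrank L V = Module.finrank K V :=
      Module.finrank_mul_finrank K L V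
    have h3 : Module.finrank K Vfix * Module.finrank K L
        = Module.finrank L V * Module.finrank K L := by
      rw [h1, ← h2, mul_comm]
    have hpos : 0 < Module.finrank K L := Module.finrank_pos
    exact Nat.eq_of_mul_eq_mul_right hpos h3
  · have h1 : Module.finrank L V = 0 := Module.finrank_of_infinite_dimensional hfd
    have h2 : ¬ FiniteDimensional K Vfix := by
      intro hKfix
      have : FiniteDimensional K (Vfix ⊗[K] L) := inferInstance
      have : FiniteDimensional K V := Module.Finite.equiv e
      exact hfd (Module.Finite.of_restrictScalars_finite K L V)
    rw [h1, Module.finrank_of_infinite_dimensional h2]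
end

section
/- Let f(z) ∈ 𝔽₂[z] be a nonzero polynomial. Then there exist a unique integer r ≥ 0 and unique polynomials v(z), u(z) ∈ 𝔽₂[z] such that f(z) = z^r · v(z) · u(z), where u(0) = v(0) = 1, v is self-reciprocal (i.e., z^{deg v} v(1/z) = v(z)), and gcd(u, ũ) = 1 where ũ(z) = z^{deg u} u(1/z). Moreover every self-reciprocal divisor of f with nonzero constant term divides v. -/
/-!
Split off the largest power of `z`, leaving `g` with `g(0) ≠ 0`. Reversal is an involution on
such polynomials and preserves divisibility, so `v := gcd(g, g̃)` divides its own reverse and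
vice versa, and it contains every self-reciprocal divisor of `g`. The cofactor `u = g / v` is
coprime to `ũ` because `v · c` divides both `g` and `g̃ = ṽ ũ` for every common divisor `c` of
`u` and `ũ`. Conversely, for any factorisation `g = v' u'` of the required shape, a Bézout
relation for `u'` and `ũ'` gives `gcd(g, g̃) ∣ v'`. Over `𝔽₂` the only unit of `𝔽₂[z]` is `1`,
so divisibility in both directions is equality.
-/

open Polynomial

namespace Polynomial

section Semiring

variable {R : Type*} [Semiring R] {p q : R[X]}

theorem ne_zero_of_coeff_zero_ne_zero (hp : p.coeff 0 ≠ 0) : p ≠ 0 := by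
  rintro rfl
  exact hp (coeff_zero 0)

theorem coeff_zero_ne_zero_of_dvd (hpq : p ∣ q) (hq : q.coeff 0 ≠ 0) : p.coeff 0 ≠ 0 := by
  obtain ⟨e, rfl⟩ := hpq
  rw [mul_coeff_zero] at hq
  exact left_ne_zero_of_mul hq

theorem reverse_reverse_of_coeff_zero_ne_zero (hp : p.coeff 0 ≠ 0) : p.reverse.reverse = p := by
  show reflect p.reverse.natDegree p.reverse = p
  rw [reverse_natDegree, natTrailingDegree_eq_zero.mpr (Or.inr hp), Nat.sub_zero]
  exact reflect_reflect

theorem natTrailingDegree_X_pow_mul_of_coeff_zero_ne_zero (hp : p.coeff 0 ≠ 0) (n : ℕ) :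
    (X ^ n * p).natTrailingDegree = n := by
  rw [X_pow_mul, natTrailingDegree_mul_X_pow (ne_zero_of_coeff_zero_ne_zero hp),
    natTrailingDegree_eq_zero.mpr (Or.inr hp), zero_add]

theorem reverse_dvd_reverse [NoZeroDivisors R] (h : p ∣ q) : p.reverse ∣ q.reverse := by
  obtain ⟨e, rfl⟩ := h
  rw [reverse_mul_of_domain]
  exact dvd_mul_right _ _

end Semiring

theorem exists_eq_X_pow_mul_coeff_zero_ne_zero {R : Type*} [CommRing R] {f : R[X]} (hf : f ≠ 0) :
    ∃ (r : ℕ) (g : R[X]), f = X ^ r * g ∧ g.coeff 0 ≠ 0 := by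
  obtain ⟨g, hfg, hXg⟩ := f.exists_eq_pow_rootMultiplicity_mul_and_not_dvd hf 0
  rw [map_zero, sub_zero] at hfg hXg
  exact ⟨_, g, hfg, mt X_dvd_iff.mpr hXg⟩

section Domain

variable {R : Type*} [CommRing R] [IsDomain R]

theorem eq_of_X_pow_mul_eq_X_pow_mul {r s : ℕ} {g h : R[X]} (hg : g.coeff 0 ≠ 0)
    (hh : h.coeff 0 ≠ 0) (e : X ^ r * g = X ^ s * h) : r = s ∧ g = h := by
  have hrs : r = s := by
    rw [← natTrailingDegree_X_pow_mul_of_coeff_zero_ne_zero hg r, e,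
      natTrailingDegree_X_pow_mul_of_coeff_zero_ne_zero hh s]
  subst hrs
  exact ⟨rfl, mul_left_cancel₀ (pow_ne_zero r X_ne_zero) e⟩

instance [Subsingleton Rˣ] : Subsingleton R[X]ˣ where
  allEq a b := Units.ext <| by
    have key (w : R[X]ˣ) : (w : R[X]) = 1 := by
      obtain ⟨c, hc, hcw⟩ := isUnit_iff.mp w.isUnit
      rw [← hcw, isUnit_iff_eq_one.mp hc, C_1]
    rw [key a, key b]

end Domain

section Field

variable {K : Type*} [Field K] {g d u v : K[X]}

theorem dvd_of_dvd_X_pow_mul (hd : d.coeff 0 ≠ 0) {r : ℕ} (h : d ∣ X ^ r * g) : d ∣ g :=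
  (irreducible_X.coprime_iff_not_dvd.mpr (mt X_dvd_iff.mp hd)).pow_left.symm.dvd_of_dvd_mul_left h

variable [DecidableEq K]

theorem dvd_gcd_reverse_of_dvd (hdg : d ∣ g) (hd : d ∣ d.reverse) : d ∣ gcd g g.reverse :=
  dvd_gcd hdg (hd.trans (reverse_dvd_reverse hdg))

theorem reverse_gcd_reverse_dvd (hg : g.coeff 0 ≠ 0) :
    (gcd g g.reverse).reverse ∣ gcd g g.reverse := by
  refine dvd_gcd ?_ (reverse_dvd_reverse (gcd_dvd_left _ _))
  simpa only [reverse_reverse_of_coeff_zero_ne_zero hg] using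
    reverse_dvd_reverse (gcd_dvd_right g g.reverse)

theorem gcd_reverse_dvd_reverse (hg : g.coeff 0 ≠ 0) :
    gcd g g.reverse ∣ (gcd g g.reverse).reverse := by
  have h := reverse_dvd_reverse (reverse_gcd_reverse_dvd hg)
  rwa [reverse_reverse_of_coeff_zero_ne_zero (coeff_zero_ne_zero_of_dvd (gcd_dvd_left _ _) hg)]
    at h

theorem isCoprime_reverse_of_eq_gcd_reverse_mul (hg : g.coeff 0 ≠ 0)
    (hu : g = gcd g g.reverse * u) : IsCoprime u u.reverse := by
  have hv : gcd g g.reverse ≠ 0 := gcd_ne_zero_of_left (ne_zero_of_coeff_zero_ne_zero hg)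
  refine IsRelPrime.isCoprime fun c hcu hcu' => ?_
  have hvc : gcd g g.reverse * c ∣ gcd g g.reverse * 1 := by
    rw [mul_one]
    refine dvd_gcd ((mul_dvd_mul_left _ hcu).trans hu.symm.dvd) ?_
    refine (mul_dvd_mul (gcd_reverse_dvd_reverse hg) hcu').trans ?_
    rw [← reverse_mul_of_domain, ← hu]
  exact isUnit_of_dvd_one ((mul_dvd_mul_iff_left hv).mp hvc)

theorem gcd_reverse_dvd_of_eq_mul (hg : g = v * u) (hv : v.reverse ∣ v)
    (hu : IsCoprime u u.reverse) : gcd g g.reverse ∣ v := by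
  obtain ⟨a, b, hab⟩ := hu
  have h1 : gcd g g.reverse ∣ v * u := (gcd_dvd_left _ _).trans hg.dvd
  have h2 : gcd g g.reverse ∣ v * u.reverse := (gcd_dvd_right _ _).trans <| by
    rw [hg, reverse_mul_of_domain]
    exact mul_dvd_mul_right hv _
  calc gcd g g.reverse ∣ a * (v * u) + b * (v * u.reverse) :=
        dvd_add (h1.mul_left a) (h2.mul_left b)
    _ = v := by linear_combination v * hab

end Field

end Polynomial

theorem ZMod.eq_one_of_ne_zero {x : ZMod 2} (hx : x ≠ 0) : x = 1 := by
  revert x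
  decide

/-- Every nonzero `f ∈ 𝔽₂[z]` factors uniquely as `f = z^r · v · u` with
`u(0) = v(0) = 1`, `v` self-reciprocal, and `u` coprime to its reciprocal `ũ`;
moreover every self-reciprocal divisor of `f` with nonzero constant term divides `v`. -/
theorem stmt4 (f : Polynomial (ZMod 2)) (hf : f ≠ 0) :
    ∃ (r : ℕ) (v u : Polynomial (ZMod 2)),
      (f = X ^ r * v * u ∧ u.coeff 0 = 1 ∧ v.coeff 0 = 1 ∧
        v.reverse = v ∧ IsCoprime u u.reverse) ∧
      (∀ d : Polynomial (ZMod 2), d ∣ f → d.coeff 0 ≠ 0 → d.reverse = d → d ∣ v) ∧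
      (∀ (r' : ℕ) (v' u' : Polynomial (ZMod 2)),
        (f = X ^ r' * v' * u' ∧ u'.coeff 0 = 1 ∧ v'.coeff 0 = 1 ∧
          v'.reverse = v' ∧ IsCoprime u' u'.reverse) →
        r' = r ∧ v' = v ∧ u' = u) := by
  obtain ⟨r, g, rfl, hg⟩ := exists_eq_X_pow_mul_coeff_zero_ne_zero hf
  obtain ⟨u, hu⟩ : gcd g g.reverse ∣ g := gcd_dvd_left _ _
  have hv : gcd g g.reverse ≠ 0 := gcd_ne_zero_of_left (ne_zero_of_coeff_zero_ne_zero hg)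
  have hmax (d : (ZMod 2)[X]) (hdg : d ∣ g) (hd : d.reverse = d) : d ∣ gcd g g.reverse :=
    dvd_gcd_reverse_of_dvd hdg hd.symm.dvd
  refine ⟨r, gcd g g.reverse, u,
    ⟨by rw [mul_assoc, ← hu],
      ZMod.eq_one_of_ne_zero (coeff_zero_ne_zero_of_dvd (Dvd.intro_left _ hu.symm) hg),
      ZMod.eq_one_of_ne_zero (coeff_zero_ne_zero_of_dvd (gcd_dvd_left _ _) hg),
      dvd_antisymm (reverse_gcd_reverse_dvd hg) (gcd_reverse_dvd_reverse hg),
      isCoprime_reverse_of_eq_gcd_reverse_mul hg hu⟩,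
    fun d hdf hd0 hd => hmax d (dvd_of_dvd_X_pow_mul hd0 hdf) hd, ?_⟩
  rintro r' v' u' ⟨hf', hu'0, hv'0, hv', hu'⟩
  have hvu' : (v' * u').coeff 0 ≠ 0 := by simp [mul_coeff_zero, hu'0, hv'0]
  obtain ⟨rfl, hg'⟩ := eq_of_X_pow_mul_eq_X_pow_mul hg hvu' (hf'.trans (mul_assoc _ _ _))
  obtain rfl : v' = gcd g g.reverse :=
    dvd_antisymm (hmax v' (Dvd.intro _ hg'.symm) hv') (gcd_reverse_dvd_of_eq_mul hg' hv'.dvd hu')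
  exact ⟨rfl, rfl, mul_left_cancel₀ hv (hg'.symm.trans hu)⟩
end

section
/- Let n ≥ 3 and let α be a primitive element of 𝔽_{2^n}. If p, q ∈ 𝔽₂[z] are nonzero polynomials of degree < n with p*(α)/p(α) = q*(α)/q(α), where p*(z) = z^{n−1} p(1/z), then p*(z)q(z) = p(z)q*(z) as polynomials, i.e., the rational functions p*/p and q*/q coincide in 𝔽₂(z). -/
/-!
Put `r = p* q - p q*`, a polynomial over `𝔽₂` of degree at most `2n - 2` whose reflection in
degree `2n - 2` is `-r`. Cross-multiplying the hypothesis gives `r(α) = 0`. The Frobenius fixes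
the coefficients of `r`, so every conjugate `α^(2^i)` is a root, and the reflection symmetry makes
every `α^(-2^i)` a root as well. These `2n` elements are distinct, because `2^n - 1` divides
neither `2^i - 2^j` for `i ≠ j < n` nor `2^i + 2^j` when `n ≥ 3`; so `r` has more roots than its
degree and vanishes. The same count with the `n` conjugates alone shows `p(α) ≠ 0`.
-/

open Polynomial

theorem Polynomial.card_le_natDegree_of_aeval_eq_zero {K L ι : Type*} [Field K] [CommRing L]
    [IsDomain L] [Algebra K L] [Fintype ι] {f : ι → L} (hf : Function.Injective f) {r : K[X]}
    (hr : r ≠ 0) (h : ∀ i, aeval (f i) r = 0) : Fintype.card ι ≤ r.natDegree := by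
  classical
  have hinj := (algebraMap K L).injective
  have hmap : r.map (algebraMap K L) ≠ 0 := (Polynomial.map_ne_zero_iff hinj).mpr hr
  rw [← natDegree_map_eq_of_injective hinj, ← Finset.card_univ, ← Finset.card_map ⟨f, hf⟩]
  refine card_le_degree_of_subset_roots fun x hx => ?_
  obtain ⟨i, -, rfl⟩ := Finset.mem_map.mp hx
  rw [mem_roots hmap, IsRoot, eval_map, ← aeval_def]
  exact h i

theorem Polynomial.aeval_pow_card_pow {K R : Type*} [Field K] [Fintype K] [CommRing R]
    [Algebra K R] (r : K[X]) (x : R) (i : ℕ) :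
    aeval (x ^ Fintype.card K ^ i) r = aeval x r ^ Fintype.card K ^ i := by
  simpa [FiniteField.coe_frobeniusAlgHom, pow_iterate] using
    aeval_algHom_apply (FiniteField.frobeniusAlgHom K R ^ i) x r

theorem Polynomial.aeval_inv_reflect_eq_zero_iff {K L : Type*} [CommSemiring K] [Field L]
    [Algebra K L] {x : L} (hx : x ≠ 0) {N : ℕ} {r : K[X]} (hr : r.natDegree ≤ N) :
    aeval x⁻¹ (r.reflect N) = 0 ↔ aeval x r = 0 := by
  have := invertibleOfNonzero hx
  simpa [aeval_def] using eval₂_reflect_eq_zero_iff (algebraMap K L) x N r hr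

section ReflectMulSubMulReflect

variable {R : Type*} [CommRing R] {N : ℕ} {p q : R[X]}

theorem Polynomial.reflect_reflect_mul_sub_mul_reflect (hp : p.natDegree ≤ N)
    (hq : q.natDegree ≤ N) :
    (p.reflect N * q - p * q.reflect N).reflect (N + N) = -(p.reflect N * q - p * q.reflect N) := by
  have hp' : (p.reflect N).natDegree ≤ N := natDegree_reflect_le.trans (max_le le_rfl hp)
  have hq' : (q.reflect N).natDegree ≤ N := natDegree_reflect_le.trans (max_le le_rfl hq)
  rw [reflect_sub, reflect_mul _ _ hp' hq, reflect_mul _ _ hp hq', reflect_reflect,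
    reflect_reflect]
  ring

theorem Polynomial.natDegree_reflect_mul_sub_mul_reflect_le (hp : p.natDegree ≤ N)
    (hq : q.natDegree ≤ N) : (p.reflect N * q - p * q.reflect N).natDegree ≤ N + N := by
  have hp' : (p.reflect N).natDegree ≤ N := natDegree_reflect_le.trans (max_le le_rfl hp)
  have hq' : (q.reflect N).natDegree ≤ N := natDegree_reflect_le.trans (max_le le_rfl hq)
  exact (natDegree_sub_le _ _).trans
    (max_le (natDegree_mul_le_of_le hp' hq) (natDegree_mul_le_of_le hp hq'))

end ReflectMulSubMulReflect

theorem Nat.two_pow_lt_two_pow_sub_one {n i : ℕ} (hn : 2 ≤ n) (hi : i < n) :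
    2 ^ i < 2 ^ n - 1 := by
  have h1 : 2 ^ i ≤ 2 ^ (n - 1) := Nat.pow_le_pow_right two_pos (by omega)
  have h2 : 2 ^ n = 2 * 2 ^ (n - 1) := by rw [← pow_succ']; congr 1; omega
  have h3 : 2 ≤ 2 ^ (n - 1) := Nat.le_self_pow (by omega) 2
  omega

theorem Nat.not_two_pow_sub_one_dvd_two_pow_add_two_pow {n i j : ℕ} (hn : 3 ≤ n) (hi : i < n)
    (hj : j < n) : ¬ 2 ^ n - 1 ∣ 2 ^ i + 2 ^ j := by
  intro hdvd
  have hi' := Nat.two_pow_lt_two_pow_sub_one (by omega) hi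
  have hj' := Nat.two_pow_lt_two_pow_sub_one (by omega) hj
  have heq : 2 ^ i + 2 ^ j = 2 ^ n - 1 :=
    Nat.eq_of_dvd_of_lt_two_mul (by positivity) hdvd (by omega)
  -- `2 ^ n - 1 ≡ 7 [MOD 8]`, whereas a sum of two powers of two is even, `≡ 1 [MOD 4]`, or `3`
  have h8 : 8 ∣ 2 ^ n := pow_dvd_pow 2 hn
  have hsmall : ∀ k, 2 ^ k = 1 ∨ 2 ^ k = 2 ∨ 4 ∣ 2 ^ k := fun k => by
    rcases k with _ | _ | k
    · simp
    · simp
    · exact .inr (.inr ⟨2 ^ k, by ring⟩)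
  rcases hsmall i with hi | hi | hi <;> rcases hsmall j with hj | hj | hj <;> omega

section PrimitiveElement

variable {G : Type*} [GroupWithZero G] {n : ℕ} {α : G}

theorem ne_zero_of_orderOf_eq_two_pow_sub_one (hn : 1 ≤ n) (hα : orderOf α = 2 ^ n - 1) :
    α ≠ 0 := by
  rintro rfl
  rw [orderOf_zero] at hα
  have := Nat.one_lt_two_pow (n := n) (by omega)
  omega

theorem injective_pow_two_pow (hn : 2 ≤ n) (hα : orderOf α = 2 ^ n - 1) :
    Function.Injective fun i : Fin n => α ^ 2 ^ (i : ℕ) := by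
  have hlt (i : Fin n) : 2 ^ (i : ℕ) ∈ Set.Iio (orderOf α) :=
    hα ▸ Nat.two_pow_lt_two_pow_sub_one hn i.2
  exact fun i j h =>
    Fin.ext (Nat.pow_right_injective le_rfl (pow_injOn_Iio_orderOf (hlt i) (hlt j) h))

theorem injective_sumElim_pow_two_pow_inv (hn : 3 ≤ n) (hα : orderOf α = 2 ^ n - 1) :
    Function.Injective
      (Sum.elim (fun i : Fin n => α ^ 2 ^ (i : ℕ)) (fun i : Fin n => (α ^ 2 ^ (i : ℕ))⁻¹)) := by
  have hpow := injective_pow_two_pow (by omega) hα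
  have hα0 := ne_zero_of_orderOf_eq_two_pow_sub_one (by omega) hα
  have hinv (i j : Fin n) : α ^ 2 ^ (i : ℕ) ≠ (α ^ 2 ^ (j : ℕ))⁻¹ := fun h => by
    rw [← mul_eq_one_iff_eq_inv₀ (pow_ne_zero _ hα0), ← pow_add] at h
    exact Nat.not_two_pow_sub_one_dvd_two_pow_add_two_pow hn i.2 j.2
      (hα ▸ orderOf_dvd_of_pow_eq_one h)
  rintro (i | i) (j | j) h
  · exact congrArg _ (hpow h)
  · exact absurd h (hinv i j)
  · exact absurd h.symm (hinv j i)
  · exact congrArg _ (hpow (inv_injective h))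

end PrimitiveElement

section CharTwo

variable {F : Type*} [Field F] [Algebra (ZMod 2) F] {n : ℕ} {α : F}

theorem aeval_pow_two_pow_eq_zero {r : (ZMod 2)[X]} {x : F} (hx : aeval x r = 0) (i : ℕ) :
    aeval (x ^ 2 ^ i) r = 0 := by
  simpa [ZMod.card, hx] using aeval_pow_card_pow r x i

theorem aeval_ne_zero_of_natDegree_lt (hn : 2 ≤ n) (hα : orderOf α = 2 ^ n - 1)
    {s : (ZMod 2)[X]} (hs : s ≠ 0) (hsd : s.natDegree < n) : aeval α s ≠ 0 := by
  intro hsα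
  have := card_le_natDegree_of_aeval_eq_zero (injective_pow_two_pow hn hα) hs
    fun i => aeval_pow_two_pow_eq_zero hsα i
  simp only [Fintype.card_fin] at this
  omega

theorem eq_zero_of_reflect_eq_neg_of_aeval_eq_zero (hn : 3 ≤ n) (hα : orderOf α = 2 ^ n - 1)
    {N : ℕ} (hN : N < 2 * n) {r : (ZMod 2)[X]} (hrd : r.natDegree ≤ N)
    (hrefl : r.reflect N = -r) (hrα : aeval α r = 0) : r = 0 := by
  by_contra hr
  have hα0 := ne_zero_of_orderOf_eq_two_pow_sub_one (by omega) hα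
  have hconj (i : Fin n) := aeval_pow_two_pow_eq_zero hrα i
  have hinv (i : Fin n) : aeval (α ^ 2 ^ (i : ℕ))⁻¹ r = 0 := by
    have := (aeval_inv_reflect_eq_zero_iff (pow_ne_zero _ hα0) hrd).2 (hconj i)
    rwa [hrefl, map_neg, neg_eq_zero] at this
  have := card_le_natDegree_of_aeval_eq_zero (injective_sumElim_pow_two_pow_inv hn hα) hr
    (Sum.rec hconj hinv)
  simp only [Fintype.card_sum, Fintype.card_fin] at this
  omega

end CharTwo

theorem stmt8_general {n : ℕ} (hn : 3 ≤ n) (F : Type*) [Field F]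
    [Algebra (ZMod 2) F]
    (α : F) (hα : orderOf α = 2 ^ n - 1)
    (p q : Polynomial (ZMod 2)) (hp : p ≠ 0) (hq : q ≠ 0)
    (hpd : p.natDegree < n) (hqd : q.natDegree < n)
    (h : aeval α (p.reflect (n - 1)) / aeval α p
       = aeval α (q.reflect (n - 1)) / aeval α q) :
    p.reflect (n - 1) * q = p * q.reflect (n - 1) := by
  have hpd' : p.natDegree ≤ n - 1 := by omega
  have hqd' : q.natDegree ≤ n - 1 := by omega
  rw [div_eq_div_iff (aeval_ne_zero_of_natDegree_lt (by omega) hα hp hpd)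
    (aeval_ne_zero_of_natDegree_lt (by omega) hα hq hqd)] at h
  rw [← sub_eq_zero]
  refine eq_zero_of_reflect_eq_neg_of_aeval_eq_zero hn hα (by omega)
    (natDegree_reflect_mul_sub_mul_reflect_le hpd' hqd')
    (reflect_reflect_mul_sub_mul_reflect hpd' hqd') ?_
  rw [map_sub, map_mul, map_mul]
  linear_combination h

/-- If `α` is a primitive element of `𝔽_{2^n}` (`n ≥ 3`) and `p, q ∈ 𝔽₂[z]` are nonzero of
degree `< n` with `p*(α)/p(α) = q*(α)/q(α)` (where `p* = z^(n-1) p(1/z)` is `reflect (n-1) p`),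
then `p* q = p q*` as polynomials, i.e. the rational functions `p*/p` and `q*/q` coincide. -/
theorem stmt8 {n : ℕ} (hn : 3 ≤ n) (F : Type*) [Field F] [Fintype F]
    [Algebra (ZMod 2) F] (hcard : Fintype.card F = 2 ^ n)
    (α : F) (hα : orderOf α = 2 ^ n - 1)
    (p q : Polynomial (ZMod 2)) (hp : p ≠ 0) (hq : q ≠ 0)
    (hpd : p.natDegree < n) (hqd : q.natDegree < n)
    (h : aeval α (p.reflect (n - 1)) / aeval α p
       = aeval α (q.reflect (n - 1)) / aeval α q) :
    p.reflect (n - 1) * q = p * q.reflect (n - 1) :=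
  stmt8_general hn F α hα p q hp hq hpd hqd h
end

section
/- Let u, w ∈ 𝔽₂[z] with u(0) = w(0) = 1, gcd(u, ũ) = 1, gcd(w, w̃) = 1, and let k, ℓ be integers. If z^k · ũ(z)/u(z) = z^ℓ · w̃(z)/w(z) in 𝔽₂(z), then k = ℓ and u = w. -/
open Polynomial

private lemma zmod2_one (a : ZMod 2) (h : a ≠ 0) : a = 1 := by revert a; decide

private lemma keylem (u w : Polynomial (ZMod 2)) (n : ℕ)
    (hu0 : u.coeff 0 = 1) (hw0 : w.coeff 0 = 1)
    (hu : IsCoprime u u.reverse) (hw : IsCoprime w w.reverse)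
    (h : X ^ n * u.reverse * w = w.reverse * u) : n = 0 ∧ u = w := by
  have hune : u ≠ 0 := fun h0 => by simp [h0] at hu0
  have hwne : w ≠ 0 := fun h0 => by simp [h0] at hw0
  have hn : n = 0 := by
    by_contra hne
    have := congrArg (fun p => p.eval 0) h
    simp only [eval_mul, eval_pow, eval_X, zero_pow hne, zero_mul,
      ← coeff_zero_eq_eval_zero, coeff_zero_reverse] at this
    rw [hu0, mul_one] at this
    exact leadingCoeff_ne_zero.2 hwne this.symm
  subst hn
  rw [pow_zero, one_mul] at h
  have h1 : u ∣ w := hu.dvd_of_dvd_mul_right ⟨w.reverse, by linear_combination h⟩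
  have h2 : w ∣ u := hw.dvd_of_dvd_mul_right ⟨u.reverse, by linear_combination -h⟩
  have := associated_of_dvd_dvd h1 h2
  exact ⟨rfl, eq_of_monic_of_associated
    (zmod2_one _ (leadingCoeff_ne_zero.2 hune))
    (zmod2_one _ (leadingCoeff_ne_zero.2 hwne)) this⟩

private lemma halflem (u w : Polynomial (ZMod 2)) (k l : ℤ) (hkl : l ≤ k)
    (hu0 : u.coeff 0 = 1) (hw0 : w.coeff 0 = 1)
    (hu : IsCoprime u u.reverse) (hw : IsCoprime w w.reverse)
    (h : (RatFunc.X : RatFunc (ZMod 2)) ^ k *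
          (algebraMap (Polynomial (ZMod 2)) (RatFunc (ZMod 2)) u.reverse) /
          (algebraMap (Polynomial (ZMod 2)) (RatFunc (ZMod 2)) u)
        = (RatFunc.X : RatFunc (ZMod 2)) ^ l *
          (algebraMap (Polynomial (ZMod 2)) (RatFunc (ZMod 2)) w.reverse) /
          (algebraMap (Polynomial (ZMod 2)) (RatFunc (ZMod 2)) w)) :
    k = l ∧ u = w := by
  set A := algebraMap (Polynomial (ZMod 2)) (RatFunc (ZMod 2)) with hA
  have hinj : Function.Injective A := RatFunc.algebraMap_injective _
  have hune : u ≠ 0 := fun h0 => by simp [h0] at hu0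
  have hwne : w ≠ 0 := fun h0 => by simp [h0] at hw0
  have hAu : A u ≠ 0 := fun h0 => hune (hinj (by simpa using h0))
  have hAw : A w ≠ 0 := fun h0 => hwne (hinj (by simpa using h0))
  have hX : (RatFunc.X : RatFunc (ZMod 2)) ≠ 0 := RatFunc.X_ne_zero
  rw [div_eq_div_iff hAu hAw] at h
  set n : ℕ := (k - l).toNat with hn
  have hkn : k = l + n := by omega
  have hXk : (RatFunc.X : RatFunc (ZMod 2)) ^ k
      = RatFunc.X ^ l * RatFunc.X ^ (n : ℕ) := by
    rw [hkn, zpow_add₀ hX, zpow_natCast]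
  rw [hXk] at h
  have hXl : (RatFunc.X : RatFunc (ZMod 2)) ^ l ≠ 0 := zpow_ne_zero _ hX
  have h2 : RatFunc.X ^ (n : ℕ) * A u.reverse * A w = A w.reverse * A u :=
    mul_left_cancel₀ hXl (by linear_combination h)
  have h3 : A (X ^ n * u.reverse * w) = A (w.reverse * u) := by
    simp only [hA, map_mul, map_pow, RatFunc.algebraMap_X]
    exact h2
  obtain ⟨hn0, huw⟩ := keylem u w n hu0 hw0 hu hw (hinj h3)
  exact ⟨by omega, huw⟩

/-- Uniqueness of the canonical representation: if `u, w ∈ 𝔽₂[z]` have `u(0) = w(0) = 1`,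
are coprime to their reciprocals, and `z^k · ũ/u = z^ℓ · w̃/w` in `𝔽₂(z)`
for integers `k, ℓ`, then `k = ℓ` and `u = w`. -/
theorem stmt12 (u w : Polynomial (ZMod 2)) (k l : ℤ)
    (hu0 : u.coeff 0 = 1) (hw0 : w.coeff 0 = 1)
    (hu : IsCoprime u u.reverse) (hw : IsCoprime w w.reverse)
    (h : (RatFunc.X : RatFunc (ZMod 2)) ^ k *
          (algebraMap (Polynomial (ZMod 2)) (RatFunc (ZMod 2)) u.reverse) /
          (algebraMap (Polynomial (ZMod 2)) (RatFunc (ZMod 2)) u)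
        = (RatFunc.X : RatFunc (ZMod 2)) ^ l *
          (algebraMap (Polynomial (ZMod 2)) (RatFunc (ZMod 2)) w.reverse) /
          (algebraMap (Polynomial (ZMod 2)) (RatFunc (ZMod 2)) w)) :
    k = l ∧ u = w := by
  rcases le_total l k with hkl | hkl
  · exact halflem u w k l hkl hu0 hw0 hu hw h
  · obtain ⟨h1, h2⟩ := halflem w u l k hkl hw0 hu0 hw hu h.symm
    exact ⟨h1.symm, h2.symm⟩
end

section
/- Let n ≥ 1, let α be a primitive element of 𝔽_{2^n}, λ ∈ 𝔽_{2^n}ˣ, and s_t = Tr_{𝔽_{2^n}/𝔽₂}(λ α^t). For 1 ≤ t ≤ 2^n − 1 let G_t ∈ 𝔽₂^{n×t} have entries (G_t)_{i,j} = s_{i+j−2} for 1 ≤ i ≤ n, 1 ≤ j ≤ t. Then G_t = V Λ G̃_t, where V ∈ 𝔽_{2^n}^{n×n} has entries V_{i,ℓ} = α^{2^{ℓ−1}(i−1)}, Λ = diag(λ, λ², …, λ^{2^{n−1}}), and G̃_t ∈ 𝔽_{2^n}^{n×t} has entries (G̃_t)_{ℓ,j} = α^{2^{ℓ−1}(j−1)}.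 Consequently rank(G_t) = min{t, n}. -/
/-!
Over `𝔽_{2^n}` the trace is the sum of the `n` Frobenius conjugates `x ^ 2 ^ ℓ`, so the entry
`Tr(λ α^(i+j))` expands as `∑ ℓ, α^(2^ℓ i) λ^(2^ℓ) α^(2^ℓ j)`, which is the factorization.
Since `α` has order `2^n - 1`, the nodes `α^(2^ℓ)`, `ℓ < n`, are distinct. Hence `V` and `Λ` are
invertible, and `G_t` has the rank of the rectangular Vandermonde matrix `G̃_t`, which contains
an invertible square Vandermonde block of size `min t n`.
-/

open Matrix

theorem pow_pow_injective_of_orderOf_eq {M : Type*} [Monoid M] {x : M} {p n : ℕ} (hp : 2 ≤ p)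
    (hx : orderOf x = p ^ n - 1) : Function.Injective fun ℓ : Fin n => x ^ p ^ (ℓ : ℕ) := by
  intro a b hab
  -- For `p = 2, n = 1` the exponent `p ^ 0` equals the order, but then `Fin n` is a subsingleton.
  rcases le_or_gt n 1 with hn | hn
  · exact Fin.ext (by omega)
  have hlt : ∀ ℓ : Fin n, p ^ (ℓ : ℕ) < orderOf x := fun ℓ => by
    have hℓ : p ^ (ℓ : ℕ) ≤ p ^ (n - 1) := Nat.pow_le_pow_right (by omega) (by omega)
    have hsucc : p ^ n = p * p ^ (n - 1) := by rw [← pow_succ']; congr 1; omega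
    have hp_le : p ≤ p ^ (n - 1) := Nat.le_self_pow (by omega) p
    have htwice : 2 * p ^ (n - 1) ≤ p * p ^ (n - 1) := Nat.mul_le_mul_right _ hp
    omega
  exact Fin.ext <| Nat.pow_right_injective hp <| pow_injOn_Iio_orderOf (hlt a) (hlt b) hab

theorem FiniteField.algebraMap_trace_eq_sum_fin_pow {K L : Type*} [Field K] [Field L] [Finite L]
    [Algebra K L] {n : ℕ} (hcard : Nat.card L = Nat.card K ^ n) (x : L) :
    algebraMap K L (Algebra.trace K L x) = ∑ ℓ : Fin n, x ^ (Nat.card K ^ (ℓ : ℕ)) := by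
  have := Finite.of_injective _ (FaithfulSMul.algebraMap_injective K L)
  have hfinrank : Module.finrank K L = n :=
    Nat.pow_right_injective Finite.one_lt_card (Module.natCard_eq_pow_finrank.symm.trans hcard)
  rw [FiniteField.algebraMap_trace_eq_sum_pow, hfinrank, Finset.sum_range]

theorem Matrix.rank_rectVandermonde_one {K : Type*} [Field K] {m t : ℕ} {v : Fin m → K}
    (hv : Function.Injective v) : (rectVandermonde v 1 t).rank = min t m := by
  refine le_antisymm (le_min ?_ ?_) ?_
  · simpa using rank_le_card_width (rectVandermonde v 1 t)
  · simpa using rank_le_card_height (rectVandermonde v 1 t)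
  rcases le_total t m with h | h
  · have hsub : (rectVandermonde v 1 t).submatrix (Fin.castLE h) id
        = vandermonde (v ∘ Fin.castLE h) := by
      ext; simp [rectVandermonde_apply]
    calc min t m = ((rectVandermonde v 1 t).submatrix (Fin.castLE h) id).rank := by
          rw [hsub, rank_of_det_ne_zero (det_vandermonde_ne_zero_iff.mpr
            (hv.comp (Fin.castLE_injective h))), Fintype.card_fin, min_eq_left h]
      _ ≤ _ := rank_submatrix_le _ _ _
  · have hsub : (rectVandermonde v 1 t).submatrix id (Fin.castLE h) = vandermonde v := by
      ext; simp [rectVandermonde_apply]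
    calc min t m = ((rectVandermonde v 1 t).submatrix id (Fin.castLE h)).rank := by
          rw [hsub, rank_of_det_ne_zero (det_vandermonde_ne_zero_iff.mpr hv), Fintype.card_fin,
            min_eq_right h]
      _ ≤ _ := rank_submatrix_le _ _ _

theorem stmt17_general {n : ℕ} (F : Type*) [Field F] [Fintype F]
    [Algebra (ZMod 2) F] (hcard : Fintype.card F = 2 ^ n)
    (α : F) (hα : orderOf α = 2 ^ n - 1)
    (lam : F) (hlam : lam ≠ 0)
    (t : ℕ)
    (Gmat : Matrix (Fin n) (Fin t) F)
    (hG : ∀ (i : Fin n) (j : Fin t), Gmat i j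
        = algebraMap (ZMod 2) F (Algebra.trace (ZMod 2) F (lam * α ^ ((i : ℕ) + (j : ℕ)))))
    (V : Matrix (Fin n) (Fin n) F)
    (hV : ∀ (i ℓ : Fin n), V i ℓ = α ^ (2 ^ (ℓ : ℕ) * (i : ℕ)))
    (Gt : Matrix (Fin n) (Fin t) F)
    (hGt : ∀ (ℓ : Fin n) (j : Fin t), Gt ℓ j = α ^ (2 ^ (ℓ : ℕ) * (j : ℕ))) :
    Gmat = V * Matrix.diagonal (fun ℓ : Fin n => lam ^ (2 ^ (ℓ : ℕ))) * Gt ∧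
    Gmat.rank = min t n := by
  set v : Fin n → F := fun ℓ => α ^ 2 ^ (ℓ : ℕ)
  have hv : Function.Injective v := pow_pow_injective_of_orderOf_eq le_rfl hα
  have hVv : V = (vandermonde v)ᵀ := by ext i ℓ; simp [v, hV, ← pow_mul]
  have hGtv : Gt = rectVandermonde v 1 t := by
    ext ℓ j; simp [v, hGt, rectVandermonde_apply, ← pow_mul]
  have hfact : Gmat = V * diagonal (fun ℓ : Fin n => lam ^ (2 ^ (ℓ : ℕ))) * Gt := by
    ext i j
    rw [hG, FiniteField.algebraMap_trace_eq_sum_fin_pow (n := n)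
      (by rw [Nat.card_zmod, Nat.card_eq_fintype_card, hcard]), Nat.card_zmod, mul_apply]
    refine Finset.sum_congr rfl fun ℓ _ => ?_
    rw [mul_diagonal, hV, hGt, mul_pow, ← pow_mul, add_mul, pow_add]
    ring
  refine ⟨hfact, ?_⟩
  have hdet : (V * diagonal fun ℓ : Fin n => lam ^ (2 ^ (ℓ : ℕ))).det ≠ 0 := by
    rw [det_mul, hVv, det_transpose, det_diagonal]
    exact mul_ne_zero (det_vandermonde_ne_zero_iff.mpr hv)
      (Finset.prod_ne_zero_iff.mpr fun ℓ _ => pow_ne_zero _ hlam)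
  rw [hfact, rank_mul_eq_right_of_det_ne_zero _ _ hdet, hGtv, rank_rectVandermonde_one hv]

/-- Vandermonde-type factorization of the observability matrix of a binary m-sequence:
with `s_t = Tr_{𝔽_{2^n}/𝔽₂}(λ α^t)` for a primitive element `α` and `λ ≠ 0`, the matrix
`(G_t)_{i,j} = s_{i+j-2}` (viewed in `𝔽_{2^n}`) factors as `G_t = V Λ G̃_t` where
`V_{i,ℓ} = α^{2^{ℓ-1}(i-1)}`, `Λ = diag(λ, λ², …, λ^{2^{n-1}})`, and
`(G̃_t)_{ℓ,j} = α^{2^{ℓ-1}(j-1)}`; consequently `rank G_t = min t n`. -/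
theorem stmt17 {n : ℕ} (hn : 1 ≤ n) (F : Type*) [Field F] [Fintype F]
    [Algebra (ZMod 2) F] (hcard : Fintype.card F = 2 ^ n)
    (α : F) (hα : orderOf α = 2 ^ n - 1)
    (lam : F) (hlam : lam ≠ 0)
    (t : ℕ) (ht1 : 1 ≤ t) (ht2 : t ≤ 2 ^ n - 1)
    (Gmat : Matrix (Fin n) (Fin t) F)
    (hG : ∀ (i : Fin n) (j : Fin t), Gmat i j
        = algebraMap (ZMod 2) F (Algebra.trace (ZMod 2) F (lam * α ^ ((i : ℕ) + (j : ℕ)))))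
    (V : Matrix (Fin n) (Fin n) F)
    (hV : ∀ (i ℓ : Fin n), V i ℓ = α ^ (2 ^ (ℓ : ℕ) * (i : ℕ)))
    (Gt : Matrix (Fin n) (Fin t) F)
    (hGt : ∀ (ℓ : Fin n) (j : Fin t), Gt ℓ j = α ^ (2 ^ (ℓ : ℕ) * (j : ℕ))) :
    Gmat = V * Matrix.diagonal (fun ℓ : Fin n => lam ^ (2 ^ (ℓ : ℕ))) * Gt ∧
    Gmat.rank = min t n :=
  stmt17_general F hcard α hα lam hlam t Gmat hG V hV Gt hGt
end
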